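/- Strong direct product theorem for fair algorithms: let G^× = G_1 × ⋯ × G_k be a direct product of plain games and let A be a (T_1,…,T_k)-fair algorithm for G^×. Then the winning probability of A is at most ∏_{i=1}^k ε_{G_i}(T_i). -/

import Mathlib

open scoped ENNReal BigOperators

noncomputable section

/-- `{0,1}`-valued indicator of a proposition, in `ℝ≥0∞`. -/
def ind (p : Prop) : ℝ≥0∞ :=
  haveI := Classical.propDecidable p
  if p then 1 else 0

/-- Deterministic oracle algorithms making at most `T` queries, modeled as decision
trees of depth at most `T`: a query is an element `q : Q`, the oracle's answer to `q`
has type `Ans q`, and the final output has type `O`. -/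
inductive DT (Q : Type) (Ans : Q → Type) (O : Type) : ℕ → Type
  | ret {T : ℕ} (o : O) : DT Q Ans O T
  | query {T : ℕ} (q : Q) (cont : Ans q → DT Q Ans O T) : DT Q Ans O (T + 1)

/-- Run a decision tree against an oracle. -/
def DT.run {Q : Type} {Ans : Q → Type} {O : Type} :
    {T : ℕ} → DT Q Ans O T → ((q : Q) → Ans q) → O
  | _, DT.ret o, _ => o
  | _, DT.query q cont, f => DT.run (cont (f q)) f

/-- The number of queries satisfying `p` made along the execution path on oracle `f`. -/
def DT.countP {Q : Type} {Ans : Q → Type} {O : Type} (p : Q → Prop) :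
    {T : ℕ} → DT Q Ans O T → ((q : Q) → Ans q) → ℕ
  | _, DT.ret _, _ => 0
  | _, DT.query q cont, f =>
      (haveI := Classical.propDecidable (p q); if p q then 1 else 0)
        + DT.countP p (cont (f q)) f

/-- A (single-challenge) game: an oracle distribution `μ` over functions
`Fin M → Fin N`, a challenge distribution `π f` for each oracle `f`, and an
accepting outcome set `R f ch` for each oracle and challenge. -/
structure Game where
  M : ℕ
  N : ℕ
  hM : 0 < M
  hN : 0 < N
  Ch : Type
  chFin : Fintype Ch
  Out : Type
  μ : PMF (Fin M → Fin N)
  π : (Fin M → Fin N) → PMF Ch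
  R : (Fin M → Fin N) → Ch → Set Out

attribute [instance] Game.chFin

namespace Game

variable (G : Game)

/-- Winning probability of a deterministic `T`-query algorithm (taking the challenge
as classical input) for the game `G`. -/
def detWinProb {T : ℕ} (a : G.Ch → DT (Fin G.M) (fun _ => Fin G.N) G.Out T) : ℝ≥0∞ :=
  ∑' f : Fin G.M → Fin G.N, G.μ f * ∑' ch : G.Ch, G.π f ch * ind ((a ch).run f ∈ G.R f ch)

/-- Uniform security `ε_G(T)`: the supremum, over randomized `T`-query algorithms
(probability distributions over deterministic ones), of the winning probability. -/
def unifSec (T : ℕ) : ℝ≥0∞ :=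
  ⨆ A : PMF (G.Ch → DT (Fin G.M) (fun _ => Fin G.N) G.Out T),
    ∑' a, A a * G.detWinProb a

/-- Winning probability, in the salted game `G_K`, of a non-uniform algorithm:
a randomized `T`-query algorithm `A` receiving `S` bits of advice together with the
salt and challenge, and an advice function `adv` mapping the joint oracle to `S` bits.
The joint oracle consists of `K` i.i.d. copies `g 0, …, g (K-1)` of the oracle of `G`,
the salt `k` is uniform on `Fin K` and the challenge is drawn from `π (g k)`. -/
def saltedWinProb (K S T : ℕ)
    (A : PMF ((Fin S → Bool) × Fin K × G.Ch →
      DT (Fin K × Fin G.M) (fun _ => Fin G.N) G.Out T))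
    (adv : (Fin K → Fin G.M → Fin G.N) → Fin S → Bool) : ℝ≥0∞ :=
  ∑' g : Fin K → Fin G.M → Fin G.N,
    (∏ k, G.μ (g k)) *
      ((K : ℝ≥0∞)⁻¹ *
        ∑' k : Fin K, ∑' ch : G.Ch, G.π (g k) ch *
          ∑' a, A a *
            ind ((a (adv g, k, ch)).run (fun q => g q.1 q.2) ∈ G.R (g k) ch))

/-- Non-uniform security `ε_{G_K}(S,T)` of the salted game `G_K`: the supremum of the
winning probability over all non-uniform `(S,T)`-algorithms `(A, adv)`. -/
def saltedNonunifSec (K S T : ℕ) : ℝ≥0∞ :=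
  ⨆ (A : PMF ((Fin S → Bool) × Fin K × G.Ch →
      DT (Fin K × Fin G.M) (fun _ => Fin G.N) G.Out T))
    (adv : (Fin K → Fin G.M → Fin G.N) → Fin S → Bool),
    G.saltedWinProb K S T A adv

/-- The marginal probability of a challenge `ch` (for `f ∼ μ`, `ch ∼ π f`). -/
def chProb (ch : G.Ch) : ℝ≥0∞ := ∑' f : Fin G.M → Fin G.N, G.μ f * G.π f ch

/-- The oracle distribution `μ_ch` conditioned on the drawn challenge being `ch`. -/
def condDist (ch : G.Ch) (f : Fin G.M → Fin G.N) : ℝ≥0∞ :=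
  G.μ f * G.π f ch / G.chProb ch

/-- Uniform security `ε_{G_ch}(T)` of the challenge-conditioned plain game `G_ch`:
the supremum over randomized `T`-query algorithms of the probability, for
`f ∼ μ_ch`, that the output lies in `R f ch`. -/
def condSec (ch : G.Ch) (T : ℕ) : ℝ≥0∞ :=
  ⨆ A : PMF (DT (Fin G.M) (fun _ => Fin G.N) G.Out T),
    ∑' a, A a * ∑' f : Fin G.M → Fin G.N, G.condDist ch f * ind (a.run f ∈ G.R f ch)

/-- Uniform security `ε_{G^n}(T')` of the multi-challenge game `G^n`: `n` i.i.d.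
challenges are drawn from `π f` and the algorithm must answer all of them. -/
def multiSec (n T' : ℕ) : ℝ≥0∞ :=
  ⨆ A : PMF ((Fin n → G.Ch) → DT (Fin G.M) (fun _ => Fin G.N) (Fin n → G.Out) T'),
    ∑' a, A a * ∑' f : Fin G.M → Fin G.N, G.μ f *
      ∑' chs : Fin n → G.Ch,
        (∏ j, G.π f (chs j)) * ind (∀ j, (a chs).run f j ∈ G.R f (chs j))

end Game

/-- A plain game: a game without challenges. -/
structure PlainGame where
  M : ℕ
  N : ℕ
  hM : 0 < M
  hN : 0 < N
  Out : Type
  μ : PMF (Fin M → Fin N)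
  R : (Fin M → Fin N) → Set Out

namespace PlainGame

/-- Uniform security `ε_G(T)` of a plain game. -/
def unifSec (G : PlainGame) (T : ℕ) : ℝ≥0∞ :=
  ⨆ A : PMF (DT (Fin G.M) (fun _ => Fin G.N) G.Out T),
    ∑' a, A a * ∑' f : Fin G.M → Fin G.N, G.μ f * ind (a.run f ∈ G.R f)

end PlainGame

/-- Query domain for joint oracle access to the oracles of `k` plain games:
each query is addressed to one of the oracles. -/
abbrev ProdQ {k : ℕ} (Gs : Fin k → PlainGame) : Type := (i : Fin k) × Fin (Gs i).M

/-- Answer type for queries in the direct product. -/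
abbrev ProdAns {k : ℕ} (Gs : Fin k → PlainGame) : ProdQ Gs → Type :=
  fun q => Fin (Gs q.1).N

/-- The joint oracle `(f 0, …, f (k-1))` as a single oracle function. -/
def jointOracle {k : ℕ} {Gs : Fin k → PlainGame}
    (f : (i : Fin k) → Fin (Gs i).M → Fin (Gs i).N) : (q : ProdQ Gs) → ProdAns Gs q :=
  fun q => f q.1 q.2

/-- Winning probability of a `(T 0, …, T (k-1))`-memoryless algorithm, given by
deterministic algorithms `A i` (each making at most `T i` queries and each with
joint oracle access) run sequentially with no shared memory; the oracles are drawn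
independently, and the algorithm wins if every output `(A i).run` is accepted. -/
def memorylessWinProb {k : ℕ} (Gs : Fin k → PlainGame) {T : Fin k → ℕ}
    (A : (i : Fin k) → DT (ProdQ Gs) (ProdAns Gs) (Gs i).Out (T i)) : ℝ≥0∞ :=
  ∑' f : (i : Fin k) → Fin (Gs i).M → Fin (Gs i).N,
    (∏ i, (Gs i).μ (f i)) * ind (∀ i, (A i).run (jointOracle f) ∈ (Gs i).R (f i))

/-- Winning probability of a deterministic algorithm with joint oracle access
outputting a tuple `(e 0, …, e (k-1))` for the direct product game. -/
def jointWinProb {k : ℕ} (Gs : Fin k → PlainGame) {B : ℕ}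
    (A : DT (ProdQ Gs) (ProdAns Gs) ((i : Fin k) → (Gs i).Out) B) : ℝ≥0∞ :=
  ∑' f : (i : Fin k) → Fin (Gs i).M → Fin (Gs i).N,
    (∏ i, (Gs i).μ (f i)) * ind (∀ i, A.run (jointOracle f) i ∈ (Gs i).R (f i))

/-- A deterministic algorithm is `(T 0, …, T (k-1))`-fair if in every execution it
makes at most `T i` queries to the `i`-th oracle. -/
def IsFair {k : ℕ} {Gs : Fin k → PlainGame} {O : Type} {B : ℕ} (T : Fin k → ℕ)
    (A : DT (ProdQ Gs) (ProdAns Gs) O B) : Prop :=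
  ∀ (f : (i : Fin k) → Fin (Gs i).M → Fin (Gs i).N) (i : Fin k),
    A.countP (fun q => q.1 = i) (jointOracle f) ≤ T i

end

/-!
Induct on the decision tree, with the oracle distributions generalized to arbitrary weights
`ν i` and fairness required only where `∏ i, ν i (f i) ≠ 0`. At a leaf the weighted winning
probability factors into one sum per game, each bounded by the algorithm that outputs the
leaf's component. At a query to oracle `i`, splitting by the answer `a` multiplies `ν i` by
the indicator of that answer and uses up one of the `T i` queries to `f i`; the other factors
do not depend on `a`, and the sum over `a` of the `i`-th factors is at most the value of the
best `T i`-query tree for game `i`, which may start with that very query.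
-/

open Finset

lemma ind_pos {p : Prop} (h : p) : ind p = 1 := by simp [ind, h]

lemma ind_neg {p : Prop} (h : ¬p) : ind p = 0 := by simp [ind, h]

lemma ind_ne_zero_iff {p : Prop} : ind p ≠ 0 ↔ p := by
  by_cases h : p <;> simp [ind, h]

lemma ind_forall {ι : Type*} [Fintype ι] (p : ι → Prop) : ind (∀ i, p i) = ∏ i, ind (p i) := by
  by_cases h : ∀ i, p i
  · rw [ind_pos h, prod_eq_one fun i _ => ind_pos (h i)]
  · obtain ⟨i, hi⟩ := not_forall.mp h
    rw [ind_neg h, prod_eq_zero (mem_univ i) (ind_neg hi)]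

lemma sum_eq_sum_sum_ind {ι α : Type*} [Fintype ι] [Fintype α] (e : ι → α)
    (F : α → ι → ℝ≥0∞) : ∑ x, F (e x) x = ∑ b, ∑ x, ind (e x = b) * F b x := by
  rw [sum_comm]
  refine sum_congr rfl fun x _ => ?_
  rw [sum_eq_single (e x) (fun b _ hb => by rw [ind_neg hb.symm, zero_mul]) (by simp),
    ind_pos rfl, one_mul]

lemma prod_update_mul {ι : Type*} [Fintype ι] [DecidableEq ι] {β : ι → Type*}
    (ν : ∀ i, β i → ℝ≥0∞) (i₀ : ι) (c : β i₀ → ℝ≥0∞) (f : ∀ i, β i) :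
    ∏ i, Function.update ν i₀ (fun g => ν i₀ g * c g) i (f i) = (∏ i, ν i (f i)) * c (f i₀) := by
  simp only [Function.apply_update (fun j (h : β j → ℝ≥0∞) => h (f j)),
    prod_update_of_mem (mem_univ i₀), prod_eq_mul_prod_sdiff_singleton_of_mem (mem_univ i₀)]
  ring

lemma ENNReal.sum_iSup_le_iSup_pi {α κ : Type*} [Fintype α] (v : α → κ → ℝ≥0∞) :
    ∑ a, ⨆ t, v a t ≤ ⨆ c : α → κ, ∑ a, v a (c a) := by
  cases isEmpty_or_nonempty κ
  · simp
  · have hsurj (a : α) : ⨆ c : α → κ, v a (c a) = ⨆ t, v a t :=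
      (Function.surjective_eval (β := fun _ => κ) a).iSup_comp (v a)
    simp_rw [← hsurj]
    refine (ENNReal.finsetSum_iSup fun c c' =>
      ⟨fun a => if v a (c a) ≤ v a (c' a) then c' a else c a, fun a => ?_⟩).le
    dsimp only
    split_ifs with h
    · exact ⟨h, le_rfl⟩
    · exact ⟨le_rfl, (not_le.mp h).le⟩

namespace PlainGame

variable (G : PlainGame)

/-- `ε_G(T)` restricted to deterministic algorithms, against unnormalized oracle weights `ν`. -/
noncomputable def weightedDetSec (ν : (Fin G.M → Fin G.N) → ℝ≥0∞) (T : ℕ) : ℝ≥0∞ :=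
  ⨆ a : DT (Fin G.M) (fun _ => Fin G.N) G.Out T, ∑ f, ν f * ind (a.run f ∈ G.R f)

variable {G}

lemma sum_le_weightedDetSec (ν : (Fin G.M → Fin G.N) → ℝ≥0∞) {T : ℕ}
    (a : DT (Fin G.M) (fun _ => Fin G.N) G.Out T) :
    ∑ f, ν f * ind (a.run f ∈ G.R f) ≤ G.weightedDetSec ν T :=
  le_iSup (fun a : DT (Fin G.M) (fun _ => Fin G.N) G.Out T => ∑ f, ν f * ind (a.run f ∈ G.R f)) a

-- Witnessed by the tree that first queries `q` and then runs the tree chosen for each answer.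
lemma sum_weightedDetSec_le (ν : (Fin G.M → Fin G.N) → ℝ≥0∞) (q : Fin G.M) (T : ℕ) :
    ∑ a, G.weightedDetSec (fun g => ν g * ind (g q = a)) T ≤ G.weightedDetSec ν (T + 1) := by
  refine (ENNReal.sum_iSup_le_iSup_pi _).trans (iSup_le fun cont => ?_)
  calc ∑ a, ∑ f, ν f * ind (f q = a) * ind ((cont a).run f ∈ G.R f)
      = ∑ f, ν f * ind ((DT.query q cont).run f ∈ G.R f) := by
        simp only [DT.run, sum_eq_sum_sum_ind (· q) fun a f => ν f * ind ((cont a).run f ∈ G.R f)]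
        exact sum_congr rfl fun a _ => sum_congr rfl fun f _ => by ring
    _ ≤ G.weightedDetSec ν (T + 1) := sum_le_weightedDetSec ν (DT.query q cont)

lemma weightedDetSec_μ_le_unifSec (T : ℕ) : G.weightedDetSec G.μ T ≤ G.unifSec T := by
  refine iSup_le fun a => le_trans (le_of_eq ?_) (le_iSup _ (PMF.pure a))
  rw [tsum_eq_single a fun b hb => by rw [PMF.pure_apply_of_ne _ _ hb, zero_mul],
    PMF.pure_apply_self, one_mul, tsum_fintype]

end PlainGame

section JointWeights

variable {k : ℕ} {Gs : Fin k → PlainGame}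

noncomputable def jointWeightedWin (ν : ∀ i, (Fin (Gs i).M → Fin (Gs i).N) → ℝ≥0∞) {B : ℕ}
    (A : DT (ProdQ Gs) (ProdAns Gs) ((i : Fin k) → (Gs i).Out) B) : ℝ≥0∞ :=
  ∑ f : ∀ i, Fin (Gs i).M → Fin (Gs i).N,
    (∏ i, ν i (f i)) * ind (∀ i, A.run (jointOracle f) i ∈ (Gs i).R (f i))

/-- Once a query is answered, the continuation is fair only on the oracles consistent with
the answer; hence fairness is relative to the support of the weights. -/
def IsFairOn (ν : ∀ i, (Fin (Gs i).M → Fin (Gs i).N) → ℝ≥0∞) {O : Type} {B : ℕ}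
    (T : Fin k → ℕ) (A : DT (ProdQ Gs) (ProdAns Gs) O B) : Prop :=
  ∀ f : ∀ i, Fin (Gs i).M → Fin (Gs i).N, (∏ i, ν i (f i)) ≠ 0 →
    ∀ i, A.countP (fun q => q.1 = i) (jointOracle f) ≤ T i

noncomputable def condWeights (ν : ∀ i, (Fin (Gs i).M → Fin (Gs i).N) → ℝ≥0∞) (q : ProdQ Gs)
    (a : ProdAns Gs q) : ∀ i, (Fin (Gs i).M → Fin (Gs i).N) → ℝ≥0∞ :=
  Function.update ν q.1 fun g => ν q.1 g * ind (g q.2 = a)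

lemma prod_condWeights (ν : ∀ i, (Fin (Gs i).M → Fin (Gs i).N) → ℝ≥0∞) (q : ProdQ Gs)
    (a : ProdAns Gs q) (f : ∀ i, Fin (Gs i).M → Fin (Gs i).N) :
    ∏ i, condWeights ν q a i (f i) = (∏ i, ν i (f i)) * ind (jointOracle f q = a) :=
  prod_update_mul ν q.1 _ f

lemma IsFair.isFairOn {O : Type} {B : ℕ} {T : Fin k → ℕ} {A : DT (ProdQ Gs) (ProdAns Gs) O B}
    (h : IsFair T A) (ν : ∀ i, (Fin (Gs i).M → Fin (Gs i).N) → ℝ≥0∞) : IsFairOn ν T A :=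
  fun f _ => h f

section Query

variable {ν : ∀ i, (Fin (Gs i).M → Fin (Gs i).N) → ℝ≥0∞} {O : Type} {B : ℕ} {T : Fin k → ℕ}
  {q : ProdQ Gs} {cont : ProdAns Gs q → DT (ProdQ Gs) (ProdAns Gs) O B}

lemma IsFairOn.exists_eq_add_one (h : IsFairOn ν T (DT.query q cont))
    {f : ∀ i, Fin (Gs i).M → Fin (Gs i).N} (hf : (∏ i, ν i (f i)) ≠ 0) :
    ∃ t, T q.1 = t + 1 := by
  have := h f hf q.1
  simp only [DT.countP, if_true] at this
  exact ⟨T q.1 - 1, by omega⟩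

lemma IsFairOn.of_query {t : ℕ} (h : IsFairOn ν T (DT.query q cont)) (ht : T q.1 = t + 1)
    (a : ProdAns Gs q) : IsFairOn (condWeights ν q a) (Function.update T q.1 t) (cont a) := by
  intro f hf i
  rw [prod_condWeights] at hf
  obtain ⟨hν, hq⟩ := mul_ne_zero_iff.mp hf
  have hcount := h f hν i
  simp only [DT.countP, ind_ne_zero_iff.mp hq] at hcount
  by_cases hi : i = q.1
  · subst hi
    simp only [if_true, Function.update_self] at hcount ⊢
    omega
  · rw [if_neg (Ne.symm hi)] at hcount
    rw [Function.update_of_ne hi]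
    omega

end Query

lemma jointWeightedWin_ret (ν : ∀ i, (Fin (Gs i).M → Fin (Gs i).N) → ℝ≥0∞) {B : ℕ}
    (o : (i : Fin k) → (Gs i).Out) :
    jointWeightedWin ν (DT.ret (T := B) o) =
      ∏ i, ∑ g : Fin (Gs i).M → Fin (Gs i).N, ν i g * ind (o i ∈ (Gs i).R g) := by
  simp only [jointWeightedWin, DT.run, ind_forall, ← prod_mul_distrib]
  rw [prod_univ_sum, Fintype.piFinset_univ]

lemma jointWeightedWin_query (ν : ∀ i, (Fin (Gs i).M → Fin (Gs i).N) → ℝ≥0∞) {B : ℕ}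
    (q : ProdQ Gs) (cont : ProdAns Gs q → DT (ProdQ Gs) (ProdAns Gs) ((i : Fin k) → (Gs i).Out) B) :
    jointWeightedWin ν (DT.query q cont) = ∑ a, jointWeightedWin (condWeights ν q a) (cont a) := by
  simp only [jointWeightedWin, DT.run, prod_condWeights,
    sum_eq_sum_sum_ind (fun f => jointOracle f q) fun a f =>
      (∏ i, ν i (f i)) * ind (∀ i, (cont a).run (jointOracle f) i ∈ (Gs i).R (f i))]
  exact sum_congr rfl fun a _ => sum_congr rfl fun f _ => by ring

theorem jointWeightedWin_le_prod {B : ℕ}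
    (A : DT (ProdQ Gs) (ProdAns Gs) ((i : Fin k) → (Gs i).Out) B)
    (ν : ∀ i, (Fin (Gs i).M → Fin (Gs i).N) → ℝ≥0∞) (T : Fin k → ℕ) (hfair : IsFairOn ν T A) :
    jointWeightedWin ν A ≤ ∏ i, (Gs i).weightedDetSec (ν i) (T i) := by
  induction A generalizing ν T with
  | ret o =>
    rw [jointWeightedWin_ret]
    exact prod_le_prod' fun i _ => PlainGame.sum_le_weightedDetSec (ν i) (DT.ret (o i))
  | query q cont ih =>
    by_cases hsupp : ∀ f : ∀ i, Fin (Gs i).M → Fin (Gs i).N, (∏ i, ν i (f i)) = 0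
    · simp [jointWeightedWin, hsupp]
    obtain ⟨f, hf⟩ := not_forall.mp hsupp
    obtain ⟨t, ht⟩ := hfair.exists_eq_add_one hf
    set S := fun i => (Gs i).weightedDetSec (ν i) (T i)
    calc jointWeightedWin ν (DT.query q cont)
        = ∑ a, jointWeightedWin (condWeights ν q a) (cont a) := jointWeightedWin_query ν q cont
      _ ≤ ∑ a, ∏ i, (Gs i).weightedDetSec (condWeights ν q a i) (Function.update T q.1 t i) :=
        sum_le_sum fun a _ => ih a _ _ (hfair.of_query ht a)
      _ = (∑ a, (Gs q.1).weightedDetSec (fun g => ν q.1 g * ind (g q.2 = a)) t) *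
            ∏ i ∈ univ \ {q.1}, S i := by
        simp only [condWeights, Function.apply_update₂ (fun i => (Gs i).weightedDetSec),
          prod_update_of_mem (mem_univ q.1), sum_mul, S]
      _ ≤ S q.1 * ∏ i ∈ univ \ {q.1}, S i := by
        gcongr
        simpa only [S, ht] using PlainGame.sum_weightedDetSec_le (ν q.1) q.2 t
      _ = ∏ i, S i := (prod_eq_mul_prod_sdiff_singleton_of_mem (mem_univ q.1) S).symm

end JointWeights

/-- Strong direct product theorem for fair algorithms:
a `(T 0, …, T (k-1))`-fair algorithm for the direct product `G 0 × ⋯ × G (k-1)`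
wins with probability at most `∏ i, ε_{G i}(T i)`. -/
theorem fair_sdpt {k : ℕ} (Gs : Fin k → PlainGame) (T : Fin k → ℕ) {B : ℕ}
    (A : DT (ProdQ Gs) (ProdAns Gs) ((i : Fin k) → (Gs i).Out) B)
    (hfair : IsFair T A) :
    jointWinProb Gs A ≤ ∏ i, (Gs i).unifSec (T i) :=
  calc jointWinProb Gs A = jointWeightedWin (fun i => (Gs i).μ) A := tsum_fintype _
    _ ≤ ∏ i, (Gs i).weightedDetSec (Gs i).μ (T i) :=
      jointWeightedWin_le_prod A _ T (hfair.isFairOn _)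
    _ ≤ ∏ i, (Gs i).unifSec (T i) :=
      prod_le_prod' fun i _ => PlainGame.weightedDetSec_μ_le_unifSec (T i)
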